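/- Let ε > 0 and let τ ∈ ℂ with Im(τ) > 0. Then the function f_τ(x) = exp(πiτx²/ε) is a Schwartz function on ℝ, it satisfies f_τ′(x) = (2πiτx/ε)·f_τ(x) for all x ∈ ℝ, and every Schwartz function f : ℝ → ℂ satisfying f′(x) = (2πiτx/ε)·f(x) for all x ∈ ℝ is a complex scalar multiple of f_τ. -/

import Mathlib

/-!
With `a = -πiτ/ε` we have `f_τ(x) = exp(-a x²)` and `Re a = π Im τ / ε > 0`. Every derivative of
`f_τ` is a polynomial times `f_τ`, and `|x|^m exp(-c x²) ≤ 1 + m!/c^m` (from `(c x²)^m/m! ≤ exp(c x²)`)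
gives the Schwartz bounds. Any solution `f` of the same first-order linear equation has
`(f / f_τ)' = 0`, since `f_τ` never vanishes, so `f` is the constant multiple `f(0)/f_τ(0)` of `f_τ`.
-/

open Complex Real Polynomial
open scoped Nat SchwartzMap

lemma abs_pow_le_one_add_sq_pow (x : ℝ) (m : ℕ) : |x| ^ m ≤ 1 + (x ^ 2) ^ m := by
  rcases le_or_gt |x| 1 with hx | hx
  · have := pow_le_one₀ (n := m) (abs_nonneg x) hx
    nlinarith [pow_nonneg (sq_nonneg x) m]
  · calc |x| ^ m ≤ |x| ^ (2 * m) := pow_le_pow_right₀ hx.le (by omega)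
      _ = (x ^ 2) ^ m := by rw [pow_mul, sq_abs]
      _ ≤ 1 + (x ^ 2) ^ m := le_add_of_nonneg_left zero_le_one

lemma sq_pow_mul_exp_neg_mul_sq_le {c : ℝ} (hc : 0 < c) (m : ℕ) (x : ℝ) :
    (x ^ 2) ^ m * Real.exp (-c * x ^ 2) ≤ m ! / c ^ m := by
  have h := Real.pow_div_factorial_le_exp _ (mul_nonneg hc.le (sq_nonneg x)) m
  rw [div_le_iff₀ (by positivity), mul_pow] at h
  rw [neg_mul, Real.exp_neg, ← div_eq_mul_inv, div_le_div_iff₀ (by positivity) (by positivity)]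
  linarith

lemma abs_pow_mul_exp_neg_mul_sq_le {c : ℝ} (hc : 0 < c) (m : ℕ) (x : ℝ) :
    |x| ^ m * Real.exp (-c * x ^ 2) ≤ 1 + m ! / c ^ m := by
  have hexp : Real.exp (-c * x ^ 2) ≤ 1 := Real.exp_le_one_iff.2 (by nlinarith [sq_nonneg x])
  calc |x| ^ m * Real.exp (-c * x ^ 2)
      ≤ (1 + (x ^ 2) ^ m) * Real.exp (-c * x ^ 2) :=
        mul_le_mul_of_nonneg_right (abs_pow_le_one_add_sq_pow x m) (Real.exp_nonneg _)
    _ = Real.exp (-c * x ^ 2) + (x ^ 2) ^ m * Real.exp (-c * x ^ 2) := by ring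
    _ ≤ 1 + m ! / c ^ m := add_le_add hexp (sq_pow_mul_exp_neg_mul_sq_le hc m x)

lemma hasDerivAt_cexp_neg_mul_sq (a : ℂ) (x : ℝ) :
    HasDerivAt (fun x : ℝ => cexp (-a * x ^ 2)) (-2 * a * x * cexp (-a * x ^ 2)) x := by
  convert (((hasDerivAt_pow 2 (x : ℂ)).const_mul (-a)).cexp).comp_ofReal using 1
  push_cast
  ring

lemma exists_iteratedDeriv_cexp_neg_mul_sq_eq (a : ℂ) (n : ℕ) :
    ∃ p : ℂ[X], iteratedDeriv n (fun x : ℝ => cexp (-a * x ^ 2)) =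
      fun x : ℝ => p.eval (x : ℂ) * cexp (-a * x ^ 2) := by
  induction n with
  | zero => exact ⟨1, by simp⟩
  | succ n ih =>
    obtain ⟨p, hp⟩ := ih
    refine ⟨derivative p - C (2 * a) * X * p, funext fun x => ?_⟩
    rw [iteratedDeriv_succ, hp]
    refine (((p.hasDerivAt x).comp_ofReal.mul (hasDerivAt_cexp_neg_mul_sq a x)).deriv).trans ?_
    simp only [eval_sub, eval_mul, eval_C, eval_X]
    ring

lemma exists_bound_pow_mul_eval_mul_cexp_neg_mul_sq {a : ℂ} (ha : 0 < a.re) (k : ℕ) (p : ℂ[X]) :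
    ∃ C, ∀ x : ℝ, ‖x‖ ^ k * ‖p.eval (x : ℂ) * cexp (-a * x ^ 2)‖ ≤ C := by
  induction p using Polynomial.induction_on' with
  | add p q hp hq =>
    obtain ⟨C₁, h₁⟩ := hp
    obtain ⟨C₂, h₂⟩ := hq
    refine ⟨C₁ + C₂, fun x => ?_⟩
    rw [eval_add, add_mul]
    calc ‖x‖ ^ k * ‖_ + _‖ ≤ ‖x‖ ^ k * (‖_‖ + ‖_‖) := by gcongr; exact norm_add_le _ _
      _ ≤ C₁ + C₂ := by rw [mul_add]; exact add_le_add (h₁ x) (h₂ x)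
  | monomial i c =>
    refine ⟨‖c‖ * (1 + (k + i) ! / a.re ^ (k + i)), fun x => ?_⟩
    calc ‖x‖ ^ k * ‖(monomial i c).eval (x : ℂ) * cexp (-a * x ^ 2)‖
        = ‖c‖ * (|x| ^ (k + i) * Real.exp (-a.re * x ^ 2)) := by
          rw [eval_monomial, norm_mul, norm_mul, norm_pow, norm_cexp_neg_mul_sq, Complex.norm_real,
            Real.norm_eq_abs, pow_add]
          ring
      _ ≤ ‖c‖ * (1 + (k + i) ! / a.re ^ (k + i)) :=
        mul_le_mul_of_nonneg_left (abs_pow_mul_exp_neg_mul_sq_le ha _ x) (norm_nonneg c)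

noncomputable def gaussianSchwartz (a : ℂ) (ha : 0 < a.re) : 𝓢(ℝ, ℂ) where
  toFun x := cexp (-a * x ^ 2)
  smooth' := Complex.contDiff_exp.comp (contDiff_const.mul (ofRealCLM.contDiff.pow 2))
  decay' k n := by
    obtain ⟨p, hp⟩ := exists_iteratedDeriv_cexp_neg_mul_sq_eq a n
    simpa only [norm_iteratedFDeriv_eq_norm_iteratedDeriv, hp]
      using exists_bound_pow_mul_eval_mul_cexp_neg_mul_sq ha k p

@[simp]
lemma gaussianSchwartz_apply (a : ℂ) (ha : 0 < a.re) (x : ℝ) :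
    gaussianSchwartz a ha x = cexp (-a * x ^ 2) := rfl

lemma hasDerivAt_gaussianSchwartz {a : ℂ} (ha : 0 < a.re) (x : ℝ) :
    HasDerivAt (gaussianSchwartz a ha) (-2 * a * x * gaussianSchwartz a ha x) x :=
  hasDerivAt_cexp_neg_mul_sq a x

lemma eq_div_mul_of_hasDerivAt_eq_mul {f g r : ℝ → ℂ} (hf : ∀ x, HasDerivAt f (r x * f x) x)
    (hg : ∀ x, HasDerivAt g (r x * g x) x) (hg₀ : ∀ x, g x ≠ 0) (x : ℝ) :
    f x = f 0 / g 0 * g x := by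
  have hquot : ∀ x, HasDerivAt (fun x => f x / g x) 0 x := fun x =>
    ((hf x).div (hg x) (hg₀ x)).congr_deriv (by ring)
  have hconst : f x / g x = f 0 / g 0 :=
    is_const_of_deriv_eq_zero (fun y => (hquot y).differentiableAt) (fun y => (hquot y).deriv) x 0
  rw [← hconst, div_mul_cancel₀ _ (hg₀ x)]

theorem holomorphic_vector_exists_unique (ε : ℝ) (hε : 0 < ε)
    (τ : ℂ) (hτ : 0 < τ.im) :
    ∃ fτ : SchwartzMap ℝ ℂ,
      (∀ x : ℝ, fτ x = Complex.exp (π * I * τ * (x : ℂ) ^ 2 / (ε : ℂ))) ∧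
      (∀ x : ℝ, deriv (fτ : ℝ → ℂ) x = (2 * π * I * τ * (x : ℂ) / (ε : ℂ)) * fτ x) ∧
      (∀ f : SchwartzMap ℝ ℂ,
        (∀ x : ℝ, deriv (f : ℝ → ℂ) x = (2 * π * I * τ * (x : ℂ) / (ε : ℂ)) * f x) →
        ∃ c : ℂ, ∀ x : ℝ, f x = c * fτ x) := by
  set a : ℂ := -(π * I * τ / ε) with ha_def
  have ha : 0 < a.re := by
    have hre : a.re = π * τ.im / ε := by simp [a, Complex.div_ofReal_re, neg_div]
    rw [hre]
    positivity
  have hcoef : -2 * a = 2 * π * I * τ / ε := by rw [ha_def]; ring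
  have hderiv : ∀ x : ℝ, HasDerivAt (gaussianSchwartz a ha)
      (2 * π * I * τ * x / ε * gaussianSchwartz a ha x) x := fun x =>
    (hasDerivAt_gaussianSchwartz ha x).congr_deriv (by rw [hcoef]; ring)
  refine ⟨gaussianSchwartz a ha, fun x => by rw [gaussianSchwartz_apply, ha_def]; congr 1; ring,
    fun x => (hderiv x).deriv, fun f hf => ⟨f 0 / gaussianSchwartz a ha 0,
      eq_div_mul_of_hasDerivAt_eq_mul (fun x => ?_) hderiv fun x => exp_ne_zero _⟩⟩
  rw [← hf x]
  exact f.differentiableAt.hasDerivAt
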